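/- arXiv:2103.09795 — 2 statements merged into one kernel-verified Lean document; each statement's English description precedes it below -/
import Mathlib

section
/- Let R = q^{2A} with A ∈ ℕ, A ≥ 1, let I ⊂ ℤ_q be an interval of length R^{-1/2}, let a ∈ I, and let T := {(x,y) ∈ ℚ_q² : |x + 2ay| ≤ R^{1/2}, |y| ≤ R}; write 𝕋(I) for the (pairwise disjoint) collection of translates of T, which tile ℚ_q². Let f : ℚ_q² → ℂ be a Schwartz function whose Fourier transform vanishes outside {(ξ,η) ∈ ℚ_q² : ξ ∈ I, |η − ξ²| ≤ 1/R}. Then there exist nonnegative real constants c_T, one for each translate T' ∈ 𝕋(I), such that |f(x)| = ∑_{T' ∈ 𝕋(I)} c_{T'} 1_{T'}(x) for every x ∈ ℚ_q², and consequently ∫_{ℚ_q²} |f|² dμ² = ∑_{T' ∈ 𝕋(I)} c_{T'}² μ²(T'). -/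
open MeasureTheory

noncomputable instance (q : ℕ) [Fact q.Prime] : MeasurableSpace ℚ_[q] := borel _
instance (q : ℕ) [Fact q.Prime] : BorelSpace ℚ_[q] := ⟨rfl⟩

/-- The Fourier transform on `ℚ_q²` with respect to the additive character `χ`
and the Haar measure `μ`. -/
noncomputable def qpFourier (q : ℕ) [Fact q.Prime] (μ : Measure ℚ_[q]) [SigmaFinite μ]
    (χ : ℚ_[q] → ℂ) (F : ℚ_[q] × ℚ_[q] → ℂ) (ξη : ℚ_[q] × ℚ_[q]) : ℂ :=
  ∫ x, F x * χ (-(ξη.1 * x.1 + ξη.2 * x.2)) ∂(μ.prod μ)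

/-- The translate `v + T` of `T = {(x,y) : |x + 2ay| ≤ q^A, |y| ≤ q^{2A}}`. -/
def translateT (q : ℕ) [Fact q.Prime] (A : ℕ) (a : ℚ_[q]) (v : ℚ_[q] × ℚ_[q]) :
    Set (ℚ_[q] × ℚ_[q]) :=
  {w : ℚ_[q] × ℚ_[q] |
    ‖(w - v).1 + 2 * a * (w - v).2‖ ≤ (q : ℝ) ^ (A : ℤ) ∧
    ‖(w - v).2‖ ≤ (q : ℝ) ^ ((2 * A : ℕ) : ℤ)}

/-!
For `t ∈ T`, the phase `ξ t₁ + η t₂` of a frequency `(ξ, η)` in the Fourier support of `f`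
agrees with `a t₁ + a² t₂` up to an element of `ℤ_q` (ultrametric inequality), so `χ` takes the
same value on both. Hence `f (· + t)` and `χ (a t₁ + a² t₂) • f` have the same Fourier transform,
and since a locally constant compactly supported function is recovered from its Fourier
transform by integrating against characters over a large ball, they coincide; in particular
`|f|` is constant on every translate of `T`. As `T` is a compact open subgroup, its translates
tile the plane, and only finitely many of them meet the support of `f`.
-/

open Metric Set

instance Prod.isUltrametricDist {X Y : Type*} [PseudoMetricSpace X] [PseudoMetricSpace Y]
    [IsUltrametricDist X] [IsUltrametricDist Y] : IsUltrametricDist (X × Y) where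
  dist_triangle_max x y z := by
    simp only [Prod.dist_eq]
    exact max_le
      ((IsUltrametricDist.dist_triangle_max _ y.1 _).trans
        (max_le_max (le_max_left _ _) (le_max_left _ _)))
      ((IsUltrametricDist.dist_triangle_max _ y.2 _).trans
        (max_le_max (le_max_right _ _) (le_max_right _ _)))

theorem IsLocallyConstant.exists_pos_forall_dist_lt {X β : Type*} [PseudoMetricSpace X] [Zero β]
    {g : X → β} (hg : IsLocallyConstant g) (hsupp : HasCompactSupport g) :
    ∃ δ > 0, ∀ x y, dist x y < δ → g y = g x := by
  obtain ⟨δ, hδ, hball⟩ := lebesgue_number_lemma_of_metric hsupp (c := fun x => g ⁻¹' {g x})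
    (fun x => hg.isOpen_fiber _) (fun x _ => mem_iUnion.2 ⟨x, rfl⟩)
  have key : ∀ x ∈ tsupport g, ∀ y, dist x y < δ → g y = g x := by
    intro x hx y hxy
    obtain ⟨z, hz⟩ := hball x hx
    exact (hz (mem_ball'.2 hxy)).trans (hz (mem_ball_self hδ)).symm
  refine ⟨δ, hδ, fun x y hxy => ?_⟩
  by_cases hx : x ∈ tsupport g
  · exact key x hx y hxy
  by_cases hy : y ∈ tsupport g
  · exact (key y hy x (by rwa [dist_comm])).symm
  rw [image_eq_zero_of_notMem_tsupport hx, image_eq_zero_of_notMem_tsupport hy]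

theorem measureReal_closedBall_pos {X : Type*} [PseudoMetricSpace X] [ProperSpace X]
    [MeasurableSpace X] (ν : Measure X) [ν.IsOpenPosMeasure] [IsFiniteMeasureOnCompacts ν]
    (x : X) {r : ℝ} (hr : 0 < r) : 0 < ν.real (closedBall x r) :=
  ENNReal.toReal_pos (measure_closedBall_pos ν x hr).ne'
    (isCompact_closedBall x r).measure_lt_top.ne

theorem AddChar.setIntegral_addSubgroup_eq_zero {G : Type*} [AddGroup G] [MeasurableSpace G]
    [MeasurableAdd G] (μ : Measure G) [μ.IsAddRightInvariant] (ψ : AddChar G ℂ)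
    (H : AddSubgroup G) (hH : MeasurableSet (H : Set G)) {ξ₀ : G} (hξ₀ : ξ₀ ∈ H)
    (hψ : ψ ξ₀ ≠ 1) : ∫ ξ in H, ψ ξ ∂μ = 0 := by
  have hshift (ξ : G) : (H : Set G).indicator ψ (ξ + ξ₀) = ψ ξ₀ * (H : Set G).indicator ψ ξ := by
    by_cases hξ : ξ ∈ H
    · rw [indicator_of_mem ((H.add_mem_cancel_right hξ₀).2 hξ), indicator_of_mem hξ,
        AddChar.map_add_eq_mul, mul_comm]
    · rw [indicator_of_notMem (mt (H.add_mem_cancel_right hξ₀).1 hξ), indicator_of_notMem hξ,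
        mul_zero]
  have hinv : ∫ ξ in H, ψ ξ ∂μ = ψ ξ₀ * ∫ ξ in H, ψ ξ ∂μ := by
    rw [← integral_indicator hH, ← integral_const_mul]
    simp_rw [← hshift]
    exact (integral_add_right_eq_self _ ξ₀).symm
  have : (ψ ξ₀ - 1) * ∫ ξ in H, ψ ξ ∂μ = 0 := by linear_combination -hinv
  exact (mul_eq_zero.1 this).resolve_left (sub_ne_zero.2 hψ)

section Character

variable {G M : Type*} [SeminormedAddCommGroup G] [Monoid M] {ψ : AddChar G M}

theorem AddChar.eq_of_norm_sub_le_one (hψ : ∀ x : G, ‖x‖ ≤ 1 → ψ x = 1) {s t : G}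
    (h : ‖s - t‖ ≤ 1) : ψ s = ψ t := by
  rw [← sub_add_cancel s t, AddChar.map_add_eq_mul, hψ _ h, one_mul]

theorem AddChar.isLocallyConstant_of_forall_norm_le_one (hψ : ∀ x : G, ‖x‖ ≤ 1 → ψ x = 1) :
    IsLocallyConstant ψ :=
  (IsLocallyConstant.iff_eventually_eq _).2 fun x => by
    filter_upwards [closedBall_mem_nhds x one_pos] with y hy
    exact AddChar.eq_of_norm_sub_le_one hψ (by rwa [← dist_eq_norm])

end Character

section Tiling

variable {X : Type*} {tile : X → Set X}

theorem apply_choose_eq_of_mem_tile {g : X → ℝ} (hg : ∀ v x, x ∈ tile v → g x = g v)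
    {T : {S : Set X // ∃ v, S = tile v}} {x : X} (hx : x ∈ T.1) : g T.2.choose = g x :=
  (hg _ x (T.2.choose_spec ▸ hx)).symm

theorem tsum_mul_indicator_tile (mem_self : ∀ x, x ∈ tile x)
    (eq_of_mem : ∀ v x, x ∈ tile v → tile v = tile x) {g : X → ℝ}
    (hg : ∀ v x, x ∈ tile v → g x = g v) (x : X) :
    ∑' T : {S : Set X // ∃ v, S = tile v}, g T.2.choose * T.1.indicator (fun _ => (1 : ℝ)) x =
      g x := by
  rw [tsum_eq_single ⟨tile x, x, rfl⟩ fun T hT => ?_]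
  · rw [indicator_of_mem (mem_self x), mul_one]
    exact apply_choose_eq_of_mem_tile hg (T := ⟨tile x, x, rfl⟩) (mem_self x)
  · have hx : x ∉ T.1 := by
      obtain ⟨S, v, rfl⟩ := T
      exact fun hx => hT (Subtype.ext (eq_of_mem v x hx))
    rw [indicator_of_notMem hx, mul_zero]

theorem finite_setOf_apply_choose_ne_zero [TopologicalSpace X] (mem_self : ∀ x, x ∈ tile x)
    (eq_of_mem : ∀ v x, x ∈ tile v → tile v = tile x) (isOpen_tile : ∀ v, IsOpen (tile v))
    {g : X → ℝ} (hsupp : HasCompactSupport g) :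
    {T : {S : Set X // ∃ v, S = tile v} | g T.2.choose ≠ 0}.Finite := by
  obtain ⟨t, ht⟩ := hsupp.isCompact.elim_finite_subcover tile isOpen_tile
    fun x _ => mem_iUnion.2 ⟨x, mem_self x⟩
  refine (t.finite_toSet.image fun v => (⟨tile v, v, rfl⟩ : {S : Set X // ∃ v, S = tile v})).subset
    fun T hT => ?_
  obtain ⟨v, hv, hmem⟩ := mem_iUnion₂.1 (ht (subset_tsupport g hT))
  exact ⟨v, hv, Subtype.ext ((eq_of_mem v _ hmem).trans T.2.choose_spec.symm)⟩

theorem integral_sq_eq_tsum_tile [TopologicalSpace X] [MeasurableSpace X] [OpensMeasurableSpace X]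
    (ν : Measure X) (mem_self : ∀ x, x ∈ tile x) (eq_of_mem : ∀ v x, x ∈ tile v → tile v = tile x)
    (isOpen_tile : ∀ v, IsOpen (tile v)) (measure_tile_ne_top : ∀ v, ν (tile v) ≠ ⊤)
    {h : X → ℝ} (hsupp : HasCompactSupport h) (hh : ∀ v x, x ∈ tile v → h x = h v) :
    ∫ x, h x ^ 2 ∂ν =
      ∑' T : {S : Set X // ∃ v, S = tile v}, h T.2.choose ^ 2 * (ν T.1).toReal := by
  set s := (finite_setOf_apply_choose_ne_zero mem_self eq_of_mem isOpen_tile hsupp).toFinset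
  have hzero : ∀ T ∉ s, h T.2.choose = 0 := fun T hT => by
    simpa [s] using hT
  have hmeas (T : {S : Set X // ∃ v, S = tile v}) : MeasurableSet T.1 := by
    obtain ⟨S, v, rfl⟩ := T
    exact (isOpen_tile v).measurableSet
  calc ∫ x, h x ^ 2 ∂ν
      = ∫ x, ∑ T ∈ s, h T.2.choose ^ 2 * T.1.indicator (fun _ => (1 : ℝ)) x ∂ν := by
        congr 1 with x
        rw [← tsum_mul_indicator_tile mem_self eq_of_mem (g := fun x => h x ^ 2)
          (fun v x hx => by rw [hh v x hx]) x, tsum_eq_sum fun T hT => by simp [hzero T hT]]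
    _ = ∑ T ∈ s, h T.2.choose ^ 2 * (ν T.1).toReal := by
        refine (integral_finsetSum s fun T _ => ?_).trans (Finset.sum_congr rfl fun T _ => ?_)
        · obtain ⟨S, v, rfl⟩ := T
          exact ((integrable_indicator_iff (hmeas _)).2
            (integrableOn_const (measure_tile_ne_top v))).const_mul _
        · rw [integral_const_mul, integral_indicator (hmeas T), setIntegral_const, measureReal_def,
            smul_eq_mul, mul_one]
    _ = _ := (tsum_eq_sum fun T hT => by simp [hzero T hT]).symm

end Tiling

theorem norm_pairing_sub_pairing_parabola_le_one {K : Type*} [NormedField K] [IsUltrametricDist K]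
    {R : ℝ} (hR : 0 < R) {a p₁ p₂ t₁ t₂ : K} (hp₁ : ‖p₁ - a‖ ≤ R⁻¹)
    (hp₂ : ‖p₂ - p₁ ^ 2‖ ≤ (R ^ 2)⁻¹)
    (ht₁ : ‖t₁ + 2 * a * t₂‖ ≤ R) (ht₂ : ‖t₂‖ ≤ R ^ 2) :
    ‖(p₁ * t₁ + p₂ * t₂) - (a * t₁ + a ^ 2 * t₂)‖ ≤ 1 := by
  have hsplit : (p₁ * t₁ + p₂ * t₂) - (a * t₁ + a ^ 2 * t₂) =
      (p₁ - a) * (t₁ + 2 * a * t₂) + ((p₁ - a) ^ 2 * t₂ + (p₂ - p₁ ^ 2) * t₂) := by ring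
  rw [hsplit]
  refine (IsUltrametricDist.norm_add_le_max _ _).trans (max_le ?_ ?_)
  · calc ‖(p₁ - a) * (t₁ + 2 * a * t₂)‖ ≤ R⁻¹ * R := by rw [norm_mul]; gcongr
      _ = 1 := inv_mul_cancel₀ hR.ne'
  refine (IsUltrametricDist.norm_add_le_max _ _).trans (max_le ?_ ?_)
  · calc ‖(p₁ - a) ^ 2 * t₂‖ ≤ R⁻¹ ^ 2 * R ^ 2 := by rw [norm_mul, norm_pow]; gcongr
      _ = 1 := by rw [inv_pow, inv_mul_cancel₀ (by positivity)]
  · calc ‖(p₂ - p₁ ^ 2) * t₂‖ ≤ (R ^ 2)⁻¹ * R ^ 2 := by rw [norm_mul]; gcongr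
      _ = 1 := inv_mul_cancel₀ (by positivity)

section Padic

variable {q : ℕ} [Fact q.Prime] (μ : Measure ℚ_[q]) [μ.IsAddHaarMeasure] {ψ : AddChar ℚ_[q] ℂ}
  {A : ℕ} {a₀ a : ℚ_[q]} {f : ℚ_[q] × ℚ_[q] → ℂ}

theorem exists_mem_closedBall_addChar_mul_ne_one
    (hψ : ∃ x : ℚ_[q], ‖x‖ ≤ q ∧ ψ x ≠ 1) (n : ℤ) {u : ℚ_[q]} (hu : ¬ ‖u‖ ≤ (q : ℝ) ^ (-n)) :
    ∃ ξ ∈ closedBall (0 : ℚ_[q]) ((q : ℝ) ^ n), ψ (ξ * u) ≠ 1 := by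
  obtain ⟨x₀, hx₀, hψx₀⟩ := hψ
  have hq : (0 : ℝ) < q := Nat.cast_pos.2 (NeZero.pos q)
  have hu_ge : (q : ℝ) ^ (-n + 1) ≤ ‖u‖ := by
    by_contra h
    exact hu ((Padic.norm_le_pow_iff_norm_lt_pow_add_one u (-n)).2 (not_le.1 h))
  have hu0 : 0 < ‖u‖ := (zpow_pos hq _).trans_le hu_ge
  refine ⟨x₀ * u⁻¹, ?_, by rwa [mul_assoc, inv_mul_cancel₀ (norm_pos_iff.1 hu0), mul_one]⟩
  rw [mem_closedBall_zero_iff, norm_mul, norm_inv, ← div_eq_mul_inv, div_le_iff₀ hu0]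
  calc ‖x₀‖ ≤ q := hx₀
    _ = q ^ n * q ^ (-n + 1) := by rw [← zpow_add₀ hq.ne', add_neg_cancel_left, zpow_one]
    _ ≤ q ^ n * ‖u‖ := by gcongr

theorem setIntegral_closedBall_addChar_mul
    (hψ_triv : ∀ x : ℚ_[q], ‖x‖ ≤ 1 → ψ x = 1)
    (hψ_nontriv : ∃ x : ℚ_[q], ‖x‖ ≤ q ∧ ψ x ≠ 1) (n : ℤ) (u : ℚ_[q]) :
    ∫ ξ in closedBall (0 : ℚ_[q]) ((q : ℝ) ^ n), ψ (ξ * u) ∂μ =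
      if ‖u‖ ≤ (q : ℝ) ^ (-n) then (μ.real (closedBall 0 ((q : ℝ) ^ n)) : ℂ) else 0 := by
  have hq : (0 : ℝ) < q := Nat.cast_pos.2 (NeZero.pos q)
  split_ifs with hu
  · have hψ1 : ∀ ξ ∈ closedBall (0 : ℚ_[q]) ((q : ℝ) ^ n), ψ (ξ * u) = 1 := by
      intro ξ hξ
      refine hψ_triv _ ?_
      rw [norm_mul]
      calc ‖ξ‖ * ‖u‖ ≤ q ^ n * q ^ (-n) := by gcongr; exact mem_closedBall_zero_iff.1 hξ
        _ = 1 := by rw [← zpow_add₀ hq.ne', add_neg_cancel, zpow_zero]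
    rw [setIntegral_congr_fun measurableSet_closedBall hψ1, setIntegral_const]
    simp
  · obtain ⟨ξ₀, hξ₀, hψξ₀⟩ := exists_mem_closedBall_addChar_mul_ne_one hψ_nontriv n hu
    exact (ψ.compAddMonoidHom (AddMonoidHom.mulRight u)).setIntegral_addSubgroup_eq_zero μ
      (IsUltrametricDist.closedBall_openAddSubgroup ℚ_[q] (zpow_pos hq n)).toAddSubgroup
      measurableSet_closedBall hξ₀ hψξ₀

theorem setIntegral_closedBall_addChar_pairing
    (hψ_triv : ∀ x : ℚ_[q], ‖x‖ ≤ 1 → ψ x = 1)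
    (hψ_nontriv : ∃ x : ℚ_[q], ‖x‖ ≤ q ∧ ψ x ≠ 1) (n : ℤ) (u : ℚ_[q] × ℚ_[q]) :
    ∫ p in closedBall (0 : ℚ_[q] × ℚ_[q]) ((q : ℝ) ^ n), ψ (p.1 * u.1 + p.2 * u.2) ∂(μ.prod μ) =
      (closedBall (0 : ℚ_[q] × ℚ_[q]) ((q : ℝ) ^ (-n))).indicator
        (fun _ => (μ.real (closedBall 0 ((q : ℝ) ^ n)) : ℂ) ^ 2) u := by
  rw [← closedBall_prod_same, Prod.fst_zero, Prod.snd_zero, ← Measure.prod_restrict]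
  simp_rw [AddChar.map_add_eq_mul]
  rw [integral_prod_mul (fun ξ => ψ (ξ * u.1)) (fun ξ => ψ (ξ * u.2)),
    setIntegral_closedBall_addChar_mul μ hψ_triv hψ_nontriv,
    setIntegral_closedBall_addChar_mul μ hψ_triv hψ_nontriv]
  have hmem : u ∈ closedBall (0 : ℚ_[q] × ℚ_[q]) ((q : ℝ) ^ (-n)) ↔
      ‖u.1‖ ≤ (q : ℝ) ^ (-n) ∧ ‖u.2‖ ≤ (q : ℝ) ^ (-n) := by
    rw [mem_closedBall_zero_iff, Prod.norm_def, max_le_iff]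
  classical
  rw [indicator_apply, hmem]
  split_ifs <;> first | tauto | ring

theorem qpFourier_comp_add_right (f : ℚ_[q] × ℚ_[q] → ℂ) (t p : ℚ_[q] × ℚ_[q]) :
    qpFourier q μ ψ (fun z => f (z + t)) p = ψ (p.1 * t.1 + p.2 * t.2) * qpFourier q μ ψ f p := by
  rw [qpFourier, qpFourier, ← integral_const_mul, ← integral_add_right_eq_self
    (fun z => ψ (p.1 * t.1 + p.2 * t.2) * (f z * ψ (-(p.1 * z.1 + p.2 * z.2)))) t]
  congr 1 with z
  rw [mul_left_comm, ← AddChar.map_add_eq_mul]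
  congr 2
  simp only [Prod.fst_add, Prod.snd_add]
  ring

theorem qpFourier_sub_const_mul (hψ : Continuous ψ) {F G : ℚ_[q] × ℚ_[q] → ℂ}
    (hF : Continuous F) (hF_supp : HasCompactSupport F) (hG : Continuous G)
    (hG_supp : HasCompactSupport G) (c : ℂ) (p : ℚ_[q] × ℚ_[q]) :
    qpFourier q μ ψ (fun z => F z - c * G z) p = qpFourier q μ ψ F p - c * qpFourier q μ ψ G p := by
  have hint {H : ℚ_[q] × ℚ_[q] → ℂ} (hH : Continuous H) (hH_supp : HasCompactSupport H) :
      Integrable (fun z => H z * ψ (-(p.1 * z.1 + p.2 * z.2))) (μ.prod μ) :=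
    (hH.mul (hψ.comp (by fun_prop))).integrable_of_hasCompactSupport hH_supp.mul_right
  simp only [qpFourier, sub_mul, mul_assoc]
  rw [integral_sub (hint hF hF_supp) ((hint hG hG_supp).const_mul c), integral_const_mul]

theorem integrable_indicator_closedBall_mul_addChar (hψ : Continuous ψ)
    {g : ℚ_[q] × ℚ_[q] → ℂ} (hg : Continuous g) (hsupp : HasCompactSupport g) {r : ℝ} (hr : 0 < r)
    (x : ℚ_[q] × ℚ_[q]) :
    Integrable (fun z : (ℚ_[q] × ℚ_[q]) × (ℚ_[q] × ℚ_[q]) =>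
      (closedBall (0 : ℚ_[q] × ℚ_[q]) r).indicator 1 z.1 *
        (g z.2 * ψ (z.1.1 * (z.2.1 - x.1) + z.1.2 * (z.2.2 - x.2))))
      ((μ.prod μ).prod (μ.prod μ)) := by
  refine Continuous.integrable_of_hasCompactSupport ?_ ?_
  · exact (((IsUltrametricDist.isClopen_closedBall 0 hr.ne').continuous_indicator
      continuous_const).comp continuous_fst).mul
      ((hg.comp continuous_snd).mul (hψ.comp (by fun_prop)))
  · refine HasCompactSupport.intro ((isCompact_closedBall (0 : ℚ_[q] × ℚ_[q]) r).prod hsupp)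
      fun z hz => ?_
    rcases not_and_or.1 (mem_prod.not.1 hz) with hp | hy
    · simp only [indicator_of_notMem hp, zero_mul]
    · simp only [image_eq_zero_of_notMem_tsupport hy, zero_mul, mul_zero]

theorem setIntegral_closedBall_addChar_mul_qpFourier
    (hψ_triv : ∀ x : ℚ_[q], ‖x‖ ≤ 1 → ψ x = 1) (hψ_nontriv : ∃ x : ℚ_[q], ‖x‖ ≤ q ∧ ψ x ≠ 1)
    {g : ℚ_[q] × ℚ_[q] → ℂ} (hg : Continuous g) (hsupp : HasCompactSupport g) (n : ℤ)
    (x : ℚ_[q] × ℚ_[q]) :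
    ∫ p in closedBall (0 : ℚ_[q] × ℚ_[q]) ((q : ℝ) ^ n),
        ψ (-(p.1 * x.1 + p.2 * x.2)) * qpFourier q μ ψ g (-p) ∂(μ.prod μ) =
      (μ.real (closedBall 0 ((q : ℝ) ^ n)) : ℂ) ^ 2 *
        ∫ y in closedBall x ((q : ℝ) ^ (-n)), g y ∂(μ.prod μ) := by
  set ν := μ.prod μ
  set B := closedBall (0 : ℚ_[q] × ℚ_[q]) ((q : ℝ) ^ n)
  have hq : (0 : ℝ) < q := Nat.cast_pos.2 (NeZero.pos q)
  set F : ℚ_[q] × ℚ_[q] → ℚ_[q] × ℚ_[q] → ℂ := fun p y =>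
    B.indicator 1 p * (g y * ψ (p.1 * (y.1 - x.1) + p.2 * (y.2 - x.2)))
  have hF : Integrable (Function.uncurry F) (ν.prod ν) :=
    integrable_indicator_closedBall_mul_addChar μ
      (ψ.isLocallyConstant_of_forall_norm_le_one hψ_triv).continuous hg hsupp (zpow_pos hq n) x
  have h_y (p : ℚ_[q] × ℚ_[q]) : ∫ y, F p y ∂ν =
      B.indicator (fun p => ψ (-(p.1 * x.1 + p.2 * x.2)) * qpFourier q μ ψ g (-p)) p := by
    have hsplit (y : ℚ_[q] × ℚ_[q]) : ψ (p.1 * (y.1 - x.1) + p.2 * (y.2 - x.2)) =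
        ψ (-(p.1 * x.1 + p.2 * x.2)) * ψ (-((-p).1 * y.1 + (-p).2 * y.2)) := by
      rw [← AddChar.map_add_eq_mul]; congr 1; simp only [Prod.fst_neg, Prod.snd_neg]; ring
    simp_rw [F, hsplit, qpFourier, ← integral_const_mul]
    by_cases hp : p ∈ B
    · simp only [indicator_of_mem hp, Pi.one_apply, one_mul]
      congr 1 with y; ring
    · simp [indicator_of_notMem hp]
  have h_p (y : ℚ_[q] × ℚ_[q]) : ∫ p, F p y ∂ν =
      (μ.real (closedBall 0 ((q : ℝ) ^ n)) : ℂ) ^ 2 *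
        (closedBall x ((q : ℝ) ^ (-n))).indicator g y := by
    have hF_eq (p : ℚ_[q] × ℚ_[q]) : F p y =
        g y * B.indicator (fun p => ψ (p.1 * (y - x).1 + p.2 * (y - x).2)) p := by
      by_cases hp : p ∈ B
      · simp [F, indicator_of_mem hp]
      · simp [F, indicator_of_notMem hp]
    simp_rw [hF_eq]
    rw [integral_const_mul, integral_indicator measurableSet_closedBall,
      setIntegral_closedBall_addChar_pairing μ hψ_triv hψ_nontriv]
    have hmem : y - x ∈ closedBall 0 ((q : ℝ) ^ (-n)) ↔ y ∈ closedBall x ((q : ℝ) ^ (-n)) := by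
      rw [mem_closedBall_zero_iff, mem_closedBall_iff_norm]
    by_cases hy : y ∈ closedBall x ((q : ℝ) ^ (-n))
    · rw [indicator_of_mem (hmem.2 hy), indicator_of_mem hy, mul_comm]
    · rw [indicator_of_notMem (mt hmem.1 hy), indicator_of_notMem hy, mul_zero, mul_zero]
  calc _ = ∫ p, ∫ y, F p y ∂ν ∂ν := by
        simp_rw [h_y]; exact (integral_indicator measurableSet_closedBall).symm
    _ = ∫ y, ∫ p, F p y ∂ν ∂ν := integral_integral_swap hF
    _ = _ := by
        simp_rw [h_p]
        rw [integral_const_mul, integral_indicator measurableSet_closedBall]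

theorem eq_zero_of_qpFourier_eq_zero
    (hψ_triv : ∀ x : ℚ_[q], ‖x‖ ≤ 1 → ψ x = 1) (hψ_nontriv : ∃ x : ℚ_[q], ‖x‖ ≤ q ∧ ψ x ≠ 1)
    {g : ℚ_[q] × ℚ_[q] → ℂ} (hg : IsLocallyConstant g) (hsupp : HasCompactSupport g)
    (h0 : ∀ p, qpFourier q μ ψ g p = 0) (x : ℚ_[q] × ℚ_[q]) : g x = 0 := by
  have hq : (0 : ℝ) < q := Nat.cast_pos.2 (NeZero.pos q)
  obtain ⟨δ, hδ, hgδ⟩ := hg.exists_pos_forall_dist_lt hsupp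
  obtain ⟨n, hn⟩ : ∃ n : ℕ, (q : ℝ) ^ (-(n : ℤ)) < δ := by
    obtain ⟨n, hn⟩ := exists_pow_lt_of_lt_one hδ
      (inv_lt_one_of_one_lt₀ (Nat.one_lt_cast.2 (Fact.out : q.Prime).one_lt))
    exact ⟨n, by rwa [zpow_neg, zpow_natCast, ← inv_pow]⟩
  have hD : ∫ y in closedBall x ((q : ℝ) ^ (-(n : ℤ))), g y ∂(μ.prod μ) =
      (μ.prod μ).real (closedBall x ((q : ℝ) ^ (-(n : ℤ)))) * g x := by
    rw [setIntegral_congr_fun measurableSet_closedBall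
      fun y hy => hgδ x y ((mem_closedBall'.1 hy).trans_lt hn), setIntegral_const,
      Complex.real_smul]
  have hinv :=
    setIntegral_closedBall_addChar_mul_qpFourier μ hψ_triv hψ_nontriv hg.continuous hsupp n x
  simp only [h0, mul_zero, integral_zero, hD] at hinv
  have hV := measureReal_closedBall_pos μ (0 : ℚ_[q]) (zpow_pos hq (n : ℤ))
  have hνD := measureReal_closedBall_pos (μ.prod μ) x (zpow_pos hq (-(n : ℤ)))
  rcases mul_eq_zero.1 hinv.symm with h | h
  · exact absurd ((pow_eq_zero_iff two_ne_zero).1 h) (by exact_mod_cast hV.ne')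
  · exact (mul_eq_zero.1 h).resolve_left (by exact_mod_cast hνD.ne')

def tubeAddSubgroup (q : ℕ) [Fact q.Prime] (A : ℕ) (a : ℚ_[q]) :
    AddSubgroup (ℚ_[q] × ℚ_[q]) where
  carrier := {t | ‖t.1 + 2 * a * t.2‖ ≤ (q : ℝ) ^ (A : ℤ) ∧ ‖t.2‖ ≤ (q : ℝ) ^ ((2 * A : ℕ) : ℤ)}
  add_mem' {s t} hs ht := by
    refine ⟨?_, (IsUltrametricDist.norm_add_le_max _ _).trans (max_le hs.2 ht.2)⟩
    rw [show (s + t).1 + 2 * a * (s + t).2 = (s.1 + 2 * a * s.2) + (t.1 + 2 * a * t.2) by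
      simp only [Prod.fst_add, Prod.snd_add]; ring]
    exact (IsUltrametricDist.norm_add_le_max _ _).trans (max_le hs.1 ht.1)
  zero_mem' := by
    simp only [Set.mem_ofPred_eq, Prod.fst_zero, Prod.snd_zero, mul_zero, add_zero, norm_zero]
    constructor <;> positivity
  neg_mem' {t} ht := by
    simpa only [Set.mem_ofPred_eq, Prod.fst_neg, Prod.snd_neg, mul_neg, ← neg_add, norm_neg]
      using ht

theorem mem_translateT_iff {v w : ℚ_[q] × ℚ_[q]} :
    w ∈ translateT q A a v ↔ w - v ∈ tubeAddSubgroup q A a :=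
  Iff.rfl

theorem self_mem_translateT (v : ℚ_[q] × ℚ_[q]) : v ∈ translateT q A a v := by
  rw [mem_translateT_iff, sub_self]
  exact zero_mem _

theorem translateT_eq_of_mem {v x : ℚ_[q] × ℚ_[q]} (h : x ∈ translateT q A a v) :
    translateT q A a v = translateT q A a x := by
  ext w
  rw [mem_translateT_iff, mem_translateT_iff, ← sub_add_sub_cancel w x v]
  exact (tubeAddSubgroup q A a).add_mem_cancel_right h

theorem coe_tubeAddSubgroup :
    (tubeAddSubgroup q A a : Set (ℚ_[q] × ℚ_[q])) =
      (fun t => (t.1 + 2 * a * t.2, t.2)) ⁻¹'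
        (closedBall 0 ((q : ℝ) ^ (A : ℤ)) ×ˢ closedBall 0 ((q : ℝ) ^ ((2 * A : ℕ) : ℤ))) := by
  ext t
  simp [tubeAddSubgroup]

theorem isOpen_tubeAddSubgroup : IsOpen (tubeAddSubgroup q A a : Set (ℚ_[q] × ℚ_[q])) := by
  have hq : (0 : ℝ) < q := Nat.cast_pos.2 (NeZero.pos q)
  rw [coe_tubeAddSubgroup]
  exact ((IsUltrametricDist.isOpen_closedBall _ (zpow_pos hq _).ne').prod
    (IsUltrametricDist.isOpen_closedBall _ (zpow_pos hq _).ne')).preimage (by fun_prop)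

theorem isCompact_tubeAddSubgroup :
    IsCompact (tubeAddSubgroup q A a : Set (ℚ_[q] × ℚ_[q])) := by
  set box := closedBall (0 : ℚ_[q]) ((q : ℝ) ^ (A : ℤ)) ×ˢ
    closedBall (0 : ℚ_[q]) ((q : ℝ) ^ ((2 * A : ℕ) : ℤ))
  have hbox : IsCompact box := (isCompact_closedBall _ _).prod (isCompact_closedBall _ _)
  rw [coe_tubeAddSubgroup]
  refine (hbox.image (f := fun t => (t.1 - 2 * a * t.2, t.2)) (by fun_prop)).of_isClosed_subset
    ((isClosed_closedBall.prod isClosed_closedBall).preimage (by fun_prop)) fun t ht => ?_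
  exact ⟨_, ht, by simp⟩

theorem isOpen_translateT (v : ℚ_[q] × ℚ_[q]) : IsOpen (translateT q A a v) :=
  isOpen_tubeAddSubgroup.preimage (continuous_sub_right v)

theorem isCompact_translateT (v : ℚ_[q] × ℚ_[q]) : IsCompact (translateT q A a v) :=
  (Homeomorph.subRight v).isCompact_preimage.2 isCompact_tubeAddSubgroup

theorem addChar_pairing_eq_of_mem_tubeAddSubgroup (hψ_triv : ∀ x : ℚ_[q], ‖x‖ ≤ 1 → ψ x = 1)
    (ha : ‖a - a₀‖ ≤ (q : ℝ) ^ (-(A : ℤ))) {p t : ℚ_[q] × ℚ_[q]}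
    (hp : ‖p.1 - a₀‖ ≤ (q : ℝ) ^ (-(A : ℤ)) ∧
      ‖p.2 - p.1 ^ 2‖ ≤ (q : ℝ) ^ (-((2 * A : ℕ) : ℤ)))
    (ht : t ∈ tubeAddSubgroup q A a) :
    ψ (p.1 * t.1 + p.2 * t.2) = ψ (a * t.1 + a ^ 2 * t.2) := by
  have hq : (0 : ℝ) < q := Nat.cast_pos.2 (NeZero.pos q)
  have hsq : (q : ℝ) ^ ((2 * A : ℕ) : ℤ) = ((q : ℝ) ^ (A : ℤ)) ^ 2 := by
    rw [← zpow_natCast _ 2, ← zpow_mul]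
    push_cast
    ring_nf
  have hpa : ‖p.1 - a‖ ≤ ((q : ℝ) ^ (A : ℤ))⁻¹ := by
    rw [← sub_add_sub_cancel p.1 a₀ a, ← zpow_neg]
    exact (IsUltrametricDist.norm_add_le_max _ _).trans (max_le hp.1 (by rwa [norm_sub_rev]))
  refine AddChar.eq_of_norm_sub_le_one hψ_triv
    (norm_pairing_sub_pairing_parabola_le_one (zpow_pos hq A) hpa ?_ ht.1 (hsq ▸ ht.2))
  rw [← hsq, ← zpow_neg]
  exact hp.2

theorem comp_add_right_eq_mul_of_mem_tubeAddSubgroup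
    (hψ_triv : ∀ x : ℚ_[q], ‖x‖ ≤ 1 → ψ x = 1) (hψ_nontriv : ∃ x : ℚ_[q], ‖x‖ ≤ q ∧ ψ x ≠ 1)
    (ha : ‖a - a₀‖ ≤ (q : ℝ) ^ (-(A : ℤ)))
    (hf_lc : IsLocallyConstant f) (hf_supp : HasCompactSupport f)
    (hFT : ∀ p : ℚ_[q] × ℚ_[q],
      ¬ (‖p.1 - a₀‖ ≤ (q : ℝ) ^ (-(A : ℤ)) ∧ ‖p.2 - p.1 ^ 2‖ ≤ (q : ℝ) ^ (-((2 * A : ℕ) : ℤ))) →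
      qpFourier q μ ψ f p = 0)
    {t : ℚ_[q] × ℚ_[q]} (ht : t ∈ tubeAddSubgroup q A a) (z : ℚ_[q] × ℚ_[q]) :
    f (z + t) = ψ (a * t.1 + a ^ 2 * t.2) * f z := by
  set c := ψ (a * t.1 + a ^ 2 * t.2)
  have hψ : Continuous ψ := (ψ.isLocallyConstant_of_forall_norm_le_one hψ_triv).continuous
  have hft_cont : Continuous fun z => f (z + t) := hf_lc.continuous.comp (continuous_add_const t)
  have hft_supp : HasCompactSupport fun z => f (z + t) :=
    hf_supp.comp_homeomorph (Homeomorph.addRight t)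
  have hg_lc : IsLocallyConstant fun z => f (z + t) - c * f z :=
    (hf_lc.comp_continuous (continuous_add_const t)).sub ((IsLocallyConstant.const c).mul hf_lc)
  have hg_fourier (p : ℚ_[q] × ℚ_[q]) : qpFourier q μ ψ (fun z => f (z + t) - c * f z) p = 0 := by
    rw [qpFourier_sub_const_mul μ hψ hft_cont hft_supp hf_lc.continuous hf_supp,
      qpFourier_comp_add_right, ← sub_mul]
    by_cases hp : qpFourier q μ ψ f p = 0
    · rw [hp, mul_zero]
    · rw [addChar_pairing_eq_of_mem_tubeAddSubgroup hψ_triv ha (not_not.1 (mt (hFT p) hp)) ht,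
        sub_self, zero_mul]
  exact sub_eq_zero.1 (eq_zero_of_qpFourier_eq_zero μ hψ_triv hψ_nontriv hg_lc
    (hft_supp.sub hf_supp.mul_left) hg_fourier z)

end Padic

theorem wave_packet_decomposition_general (q : ℕ) [Fact q.Prime]
    (μ : Measure ℚ_[q]) [μ.IsAddHaarMeasure] [SigmaFinite μ]
    (χ : ℚ_[q] → ℂ)
    (hχ_mul : ∀ x y : ℚ_[q], χ (x + y) = χ x * χ y)
    (hχ_norm : ∀ x : ℚ_[q], ‖χ x‖ = 1)
    (hχ_triv : ∀ x : ℚ_[q], ‖x‖ ≤ 1 → χ x = 1)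
    (hχ_nontriv : ∃ x : ℚ_[q], ‖x‖ ≤ (q : ℝ) ∧ χ x ≠ 1)
    (A : ℕ) (a₀ a : ℚ_[q]) (ha : ‖a - a₀‖ ≤ (q : ℝ) ^ (-(A : ℤ)))
    (f : ℚ_[q] × ℚ_[q] → ℂ) (hf_lc : IsLocallyConstant f) (hf_supp : HasCompactSupport f)
    (hFT : ∀ p : ℚ_[q] × ℚ_[q],
      ¬ (‖p.1 - a₀‖ ≤ (q : ℝ) ^ (-(A : ℤ)) ∧ ‖p.2 - p.1 ^ 2‖ ≤ (q : ℝ) ^ (-((2 * A : ℕ) : ℤ))) →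
      qpFourier q μ χ f p = 0) :
    ∃ c : {S : Set (ℚ_[q] × ℚ_[q]) // ∃ v, S = translateT q A a v} → ℝ,
      (∀ T', 0 ≤ c T') ∧
      (∀ x : ℚ_[q] × ℚ_[q],
        ‖f x‖ = ∑' T' : {S : Set (ℚ_[q] × ℚ_[q]) // ∃ v, S = translateT q A a v},
          c T' * Set.indicator T'.1 (fun _ => (1 : ℝ)) x) ∧
      ∫ x, ‖f x‖ ^ 2 ∂(μ.prod μ)
        = ∑' T' : {S : Set (ℚ_[q] × ℚ_[q]) // ∃ v, S = translateT q A a v},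
            c T' ^ 2 * ((μ.prod μ) T'.1).toReal := by
  let ψ : AddChar ℚ_[q] ℂ := ⟨χ, hχ_triv 0 (by simp), hχ_mul⟩
  have hconst (v x : ℚ_[q] × ℚ_[q]) (hx : x ∈ translateT q A a v) : ‖f x‖ = ‖f v‖ := by
    rw [← add_sub_cancel v x, comp_add_right_eq_mul_of_mem_tubeAddSubgroup μ (ψ := ψ) hχ_triv
      hχ_nontriv ha hf_lc hf_supp hFT hx, norm_mul, show ‖ψ _‖ = 1 from hχ_norm _, one_mul]
  exact ⟨fun T => ‖f T.2.choose‖, fun T => norm_nonneg _,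
    fun x => (tsum_mul_indicator_tile self_mem_translateT (fun _ _ => translateT_eq_of_mem)
      hconst x).symm,
    integral_sq_eq_tsum_tile _ self_mem_translateT (fun _ _ => translateT_eq_of_mem)
      isOpen_translateT (fun v => (isCompact_translateT v).measure_lt_top.ne) hf_supp.norm hconst⟩

/-- **Wave packet decomposition.** If `f` is Schwartz with Fourier support in the
`R^{-1}`-neighbourhood of the parabola over an interval `I` of length `R^{-1/2}` (`R = q^{2A}`),
then `|f| = ∑_{T' ∈ 𝕋(I)} c_{T'} 1_{T'}` for nonnegative constants `c_{T'}` indexed by the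
translates of the dual parallelogram `T`, and `∫ |f|² = ∑_{T'} c_{T'}² μ²(T')`. -/
theorem wave_packet_decomposition (q : ℕ) [Fact q.Prime] (hq2 : q ≠ 2)
    (μ : Measure ℚ_[q]) [μ.IsAddHaarMeasure] [SigmaFinite μ]
    (hμ : μ {x : ℚ_[q] | ‖x‖ ≤ 1} = 1)
    (χ : ℚ_[q] → ℂ)
    (hχ_mul : ∀ x y : ℚ_[q], χ (x + y) = χ x * χ y)
    (hχ_norm : ∀ x : ℚ_[q], ‖χ x‖ = 1)
    (hχ_triv : ∀ x : ℚ_[q], ‖x‖ ≤ 1 → χ x = 1)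
    (hχ_nontriv : ∃ x : ℚ_[q], ‖x‖ ≤ (q : ℝ) ∧ χ x ≠ 1)
    (A : ℕ) (hA : 1 ≤ A) (a₀ a : ℚ_[q]) (ha₀ : ‖a₀‖ ≤ 1) (ha : ‖a - a₀‖ ≤ (q : ℝ) ^ (-(A : ℤ)))
    (f : ℚ_[q] × ℚ_[q] → ℂ) (hf_lc : IsLocallyConstant f) (hf_supp : HasCompactSupport f)
    (hFT : ∀ p : ℚ_[q] × ℚ_[q],
      ¬ (‖p.1 - a₀‖ ≤ (q : ℝ) ^ (-(A : ℤ)) ∧ ‖p.2 - p.1 ^ 2‖ ≤ (q : ℝ) ^ (-((2 * A : ℕ) : ℤ))) →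
      qpFourier q μ χ f p = 0) :
    ∃ c : {S : Set (ℚ_[q] × ℚ_[q]) // ∃ v, S = translateT q A a v} → ℝ,
      (∀ T', 0 ≤ c T') ∧
      (∀ x : ℚ_[q] × ℚ_[q],
        ‖f x‖ = ∑' T' : {S : Set (ℚ_[q] × ℚ_[q]) // ∃ v, S = translateT q A a v},
          c T' * Set.indicator T'.1 (fun _ => (1 : ℝ)) x) ∧
      ∫ x, ‖f x‖ ^ 2 ∂(μ.prod μ)
        = ∑' T' : {S : Set (ℚ_[q] × ℚ_[q]) // ∃ v, S = translateT q A a v},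
            c T' ^ 2 * ((μ.prod μ) T'.1).toReal :=
  wave_packet_decomposition_general q μ χ hχ_mul hχ_norm hχ_triv hχ_nontriv A a₀ a ha f hf_lc
    hf_supp hFT
end

section
/- Let R = q^{2A} with A ∈ ℕ, A ≥ 1, and let a, b ∈ ℤ_q with a ≠ b. Set T := {(x,y) ∈ ℚ_q² : |x + 2ay| ≤ R, |y| ≤ R²} and T' := {(x,y) ∈ ℚ_q² : |x + 2by| ≤ R, |y| ≤ R²}. Then μ²(T ∩ T') ≤ R² / |b − a|. -/
open MeasureTheory

/-!
Subtracting the two defining conditions gives `‖2 (b - a) y‖ ≤ R`, and `‖2‖ = 1` as `q` is odd,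
so `T ∩ T'` lies in the parallelogram `{‖x + 2ay‖ ≤ R, ‖y‖ ≤ R / ‖b - a‖}`. The shear
`(x, y) ↦ (x + 2ay, y)` preserves `μ²`, so this parallelogram has measure `μ(B_R) μ(B_{R/‖b-a‖})`.
Every ball `B_{q^(n+1)}` is the disjoint union of `q` translates of `B_{q^n}`, hence
`μ(B_{q^n}) = q^n` for all `n : ℤ`, and `‖b - a‖` is an integral power of `q`.
-/

section Shear

variable {R : Type*} [Ring R] [MeasurableSpace R] [MeasurableAdd₂ R] [MeasurableMul R]
  (μ : Measure R) [SFinite μ] [μ.IsAddRightInvariant]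

theorem measurePreserving_shear (c : R) :
    MeasurePreserving (fun w : R × R => (w.1 + c * w.2, w.2)) (μ.prod μ) (μ.prod μ) := by
  have shear_snd : MeasurePreserving (fun w : R × R => (w.1, w.2 + c * w.1))
      (μ.prod μ) (μ.prod μ) :=
    (MeasurePreserving.id μ).skew_product (by fun_prop)
      (.of_forall fun y => map_add_right_eq_self μ (c * y))
  exact (Measure.measurePreserving_swap.comp shear_snd).comp Measure.measurePreserving_swap

theorem measure_prod_shear_preimage (c : R) {s t : Set R} (hs : MeasurableSet s)
    (ht : MeasurableSet t) :
    μ.prod μ {w | w.1 + c * w.2 ∈ s ∧ w.2 ∈ t} = μ s * μ t :=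
  ((measurePreserving_shear μ c).measure_preimage (hs.prod ht).nullMeasurableSet).trans
    (Measure.prod_prod s t)

end Shear

theorem norm_le_div_norm_sub_of_norm_add_mul_le {K : Type*} [NormedField K] [IsUltrametricDist K]
    {x y a b : K} {r : ℝ} (hab : a ≠ b) (ha : ‖x + a * y‖ ≤ r) (hb : ‖x + b * y‖ ≤ r) :
    ‖y‖ ≤ r / ‖b - a‖ := by
  have hdiff : ‖(b - a) * y‖ ≤ r := by
    calc ‖(b - a) * y‖ = ‖(x + b * y) + -(x + a * y)‖ := by congr 1; ring
      _ ≤ max ‖x + b * y‖ ‖-(x + a * y)‖ := IsUltrametricDist.norm_add_le_max _ _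
      _ ≤ r := by rw [norm_neg]; exact max_le hb ha
  rwa [le_div_iff₀ (norm_pos_iff.mpr (sub_ne_zero.mpr hab.symm)), mul_comm, ← norm_mul]

namespace Padic

open Metric

variable {q : ℕ} [Fact q.Prime]

theorem norm_two_eq_one (hq2 : q ≠ 2) : ‖(2 : ℚ_[q])‖ = 1 := by
  exact_mod_cast norm_natCast_eq_one_iff.mpr ((Nat.coprime_primes Fact.out Nat.prime_two).mpr hq2)

theorem norm_natCast_sub_natCast_eq_one {i j : ℕ} (hi : i < q) (hj : j < q) (hij : i ≠ j) :
    ‖(i - j : ℚ_[q])‖ = 1 := by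
  have hndvd : ¬ (q : ℤ) ∣ (i - j : ℤ) := fun hdvd =>
    hij (by have := Int.eq_zero_of_abs_lt_dvd hdvd (by rw [abs_lt]; omega); omega)
  have hnorm := norm_intCast_lt_one_iff.not.mpr hndvd
  push_cast at hnorm
  exact le_antisymm (by exact_mod_cast norm_int_le_one (i - j : ℤ)) (not_lt.mp hnorm)

theorem exists_natCast_norm_sub_le_inv {z : ℚ_[q]} (hz : ‖z‖ ≤ 1) :
    ∃ j < q, ‖z - j‖ ≤ (q : ℝ)⁻¹ := by
  set z' : ℤ_[q] := ⟨z, hz⟩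
  obtain ⟨hj, hmem⟩ := PadicInt.zmodRepr_spec z'
  have hlt : ‖z' - z'.zmodRepr‖ < 1 := PadicInt.mem_nonunits.mp hmem
  rw [PadicInt.norm_def, PadicInt.coe_sub, PadicInt.coe_natCast] at hlt
  refine ⟨_, hj, ?_⟩
  simpa using (norm_le_pow_iff_norm_lt_pow_add_one _ (-1)).mpr (by simpa using hlt)

theorem closedBall_zpow_succ_eq_biUnion (n : ℤ) :
    closedBall (0 : ℚ_[q]) ((q : ℝ) ^ (n + 1)) =
      ⋃ j ∈ Finset.range q, closedBall (j * (q : ℚ_[q]) ^ (-(n + 1))) ((q : ℝ) ^ n) := by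
  have hq : (1 : ℝ) < q := Nat.one_lt_cast.mpr (Fact.out : q.Prime).one_lt
  have ht : ‖(q : ℚ_[q]) ^ (-(n + 1))‖ = (q : ℝ) ^ (n + 1) := by rw [norm_p_zpow, neg_neg]
  ext x
  simp only [Set.mem_iUnion, mem_closedBall, dist_eq_norm, sub_zero, Finset.mem_range,
    exists_prop]
  constructor
  · intro hx
    have hz : ‖x * (q : ℚ_[q]) ^ (n + 1)‖ ≤ 1 := by
      rw [norm_mul, norm_p_zpow, zpow_neg, ← div_eq_mul_inv]
      exact div_le_one_of_le₀ hx (by positivity)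
    obtain ⟨j, hj, hzj⟩ := exists_natCast_norm_sub_le_inv hz
    refine ⟨j, hj, ?_⟩
    have hq0 : (q : ℚ_[q]) ≠ 0 := Nat.cast_ne_zero.mpr (Fact.out : q.Prime).ne_zero
    calc ‖x - j * (q : ℚ_[q]) ^ (-(n + 1))‖
        = ‖x * (q : ℚ_[q]) ^ (n + 1) - j‖ * ‖(q : ℚ_[q]) ^ (-(n + 1))‖ := by
          rw [← norm_mul, sub_mul, mul_assoc, ← zpow_add₀ hq0, add_neg_cancel, zpow_zero,
            mul_one]
      _ ≤ (q : ℝ)⁻¹ * (q : ℝ) ^ (n + 1) := by rw [ht]; gcongr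
      _ = (q : ℝ) ^ n := by
          rw [zpow_add_one₀ (by positivity), mul_comm, mul_assoc, mul_inv_cancel₀ (by positivity),
            mul_one]
  · rintro ⟨j, -, hx⟩
    have hjt : ‖(j : ℚ_[q]) * (q : ℚ_[q]) ^ (-(n + 1))‖ ≤ (q : ℝ) ^ (n + 1) := by
      rw [norm_mul, ht]
      exact mul_le_of_le_one_left (by positivity) (IsUltrametricDist.norm_natCast_le_one _ j)
    calc ‖x‖ = ‖(x - j * (q : ℚ_[q]) ^ (-(n + 1))) + j * (q : ℚ_[q]) ^ (-(n + 1))‖ := by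
          rw [sub_add_cancel]
      _ ≤ _ := IsUltrametricDist.norm_add_le_max _ _
      _ ≤ (q : ℝ) ^ (n + 1) :=
        max_le (hx.trans (zpow_le_zpow_right₀ hq.le (Int.le_add_one le_rfl))) hjt

theorem pairwiseDisjoint_closedBall_natCast_mul_zpow (n : ℤ) :
    (Finset.range q : Set ℕ).PairwiseDisjoint
      fun j => closedBall (j * (q : ℚ_[q]) ^ (-(n + 1))) ((q : ℝ) ^ n) := by
  have hq : (1 : ℝ) < q := Nat.one_lt_cast.mpr (Fact.out : q.Prime).one_lt
  intro i hi j hj hij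
  simp only [Finset.coe_range, Set.mem_Iio] at hi hj
  refine Set.disjoint_left.mpr fun x hxi hxj => ?_
  rw [mem_closedBall] at hxi hxj
  have hcenters := (IsUltrametricDist.dist_triangle_max _ x _).trans
    (max_le (dist_comm x _ ▸ hxi) hxj)
  rw [dist_eq_norm, ← sub_mul, norm_mul, norm_natCast_sub_natCast_eq_one hi hj hij, one_mul,
    norm_p_zpow, neg_neg] at hcenters
  exact (zpow_lt_zpow_right₀ hq (lt_add_one n)).not_ge hcenters

theorem measure_closedBall_zpow_succ (μ : Measure ℚ_[q]) [μ.IsAddHaarMeasure] (n : ℤ) :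
    μ (closedBall 0 ((q : ℝ) ^ (n + 1))) = q * μ (closedBall 0 ((q : ℝ) ^ n)) := by
  rw [closedBall_zpow_succ_eq_biUnion, measure_biUnion_finset
    (pairwiseDisjoint_closedBall_natCast_mul_zpow n) fun _ _ => measurableSet_closedBall]
  simp [Measure.addHaar_closedBall_center]

theorem measure_closedBall_zpow (μ : Measure ℚ_[q]) [μ.IsAddHaarMeasure]
    (hμ : μ (closedBall 0 1) = 1) (n : ℤ) :
    μ (closedBall 0 ((q : ℝ) ^ n)) = ENNReal.ofReal ((q : ℝ) ^ n) := by
  have hq : (0 : ℝ) < q := Nat.cast_pos.mpr (Fact.out : q.Prime).pos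
  have hstep (n : ℤ) : ENNReal.ofReal ((q : ℝ) ^ (n + 1)) = q * ENNReal.ofReal ((q : ℝ) ^ n) := by
    rw [zpow_add_one₀ hq.ne', mul_comm, ENNReal.ofReal_mul hq.le, ENNReal.ofReal_natCast]
  induction n using Int.induction_on with
  | zero => simpa using hμ
  | succ n ih => rw [measure_closedBall_zpow_succ, ih, hstep]
  | pred n ih =>
    have h := measure_closedBall_zpow_succ μ (-n - 1)
    rw [sub_add_cancel, ih, ← sub_add_cancel (-(n : ℤ)) 1, hstep, sub_add_cancel] at h
    exact (ENNReal.mul_right_inj (by simpa using hq.ne') (ENNReal.natCast_ne_top q)).mp h.symm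

end Padic

theorem tube_intersection_general (q : ℕ) [Fact q.Prime] (hq2 : q ≠ 2)
    (μ : Measure ℚ_[q]) [μ.IsAddHaarMeasure]
    (hμ : μ {x : ℚ_[q] | ‖x‖ ≤ 1} = 1)
    (A : ℕ) (a b : ℚ_[q]) (hab : a ≠ b) :
    (μ.prod μ)
        ({w : ℚ_[q] × ℚ_[q] |
            ‖w.1 + 2 * a * w.2‖ ≤ (q : ℝ) ^ ((2 * A : ℕ) : ℤ) ∧
            ‖w.2‖ ≤ (q : ℝ) ^ ((4 * A : ℕ) : ℤ)} ∩
          {w : ℚ_[q] × ℚ_[q] |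
            ‖w.1 + 2 * b * w.2‖ ≤ (q : ℝ) ^ ((2 * A : ℕ) : ℤ) ∧
            ‖w.2‖ ≤ (q : ℝ) ^ ((4 * A : ℕ) : ℤ)})
      ≤ ENNReal.ofReal ((q : ℝ) ^ ((4 * A : ℕ) : ℤ) / ‖b - a‖) := by
  set R : ℝ := (q : ℝ) ^ ((2 * A : ℕ) : ℤ)
  have hq : (0 : ℝ) < q := Nat.cast_pos.mpr (Fact.out : q.Prime).pos
  have hball := Padic.measure_closedBall_zpow μ <| by
    simpa [Metric.closedBall, dist_zero_right] using hμ
  have hnorm_two := Padic.norm_two_eq_one hq2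
  have hradius : R / ‖2 * b - 2 * a‖ = (q : ℝ) ^ ((2 * A : ℕ) + (b - a).valuation) := by
    rw [← mul_sub, norm_mul, hnorm_two, one_mul,
      Padic.norm_eq_zpow_neg_valuation (sub_ne_zero.mpr hab.symm), div_eq_mul_inv, ← zpow_neg,
      neg_neg, ← zpow_add₀ hq.ne']
  calc _ ≤ μ.prod μ {w : ℚ_[q] × ℚ_[q] | w.1 + 2 * a * w.2 ∈ Metric.closedBall 0 R ∧
        w.2 ∈ Metric.closedBall 0 (R / ‖2 * b - 2 * a‖)} :=
      measure_mono <| by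
        rintro w ⟨⟨ha, -⟩, hb, -⟩
        exact ⟨mem_closedBall_zero_iff.mpr ha, mem_closedBall_zero_iff.mpr
          (norm_le_div_norm_sub_of_norm_add_mul_le (by simpa using hab) ha hb)⟩
    _ = ENNReal.ofReal R * ENNReal.ofReal (R / ‖2 * b - 2 * a‖) := by
      rw [measure_prod_shear_preimage μ _ measurableSet_closedBall measurableSet_closedBall,
        hradius, hball, hball]
    _ = ENNReal.ofReal ((q : ℝ) ^ ((4 * A : ℕ) : ℤ) / ‖b - a‖) := by
      rw [← ENNReal.ofReal_mul (by positivity), ← mul_sub, norm_mul, hnorm_two, one_mul,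
        ← mul_div_assoc, ← zpow_add₀ hq.ne']
      congr 3
      omega

/-- With `R = q^{2A}` and `a ≠ b` in `ℤ_q`, the parallelograms
`T = {|x + 2ay| ≤ R, |y| ≤ R²}` and `T' = {|x + 2by| ≤ R, |y| ≤ R²}` satisfy
`μ²(T ∩ T') ≤ R² / |b - a|`. -/
theorem tube_intersection (q : ℕ) [Fact q.Prime] (hq2 : q ≠ 2)
    (μ : Measure ℚ_[q]) [μ.IsAddHaarMeasure] [SigmaFinite μ]
    (hμ : μ {x : ℚ_[q] | ‖x‖ ≤ 1} = 1)
    (A : ℕ) (hA : 1 ≤ A) (a b : ℚ_[q]) (ha : ‖a‖ ≤ 1) (hb : ‖b‖ ≤ 1) (hab : a ≠ b) :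
    (μ.prod μ)
        ({w : ℚ_[q] × ℚ_[q] |
            ‖w.1 + 2 * a * w.2‖ ≤ (q : ℝ) ^ ((2 * A : ℕ) : ℤ) ∧
            ‖w.2‖ ≤ (q : ℝ) ^ ((4 * A : ℕ) : ℤ)} ∩
          {w : ℚ_[q] × ℚ_[q] |
            ‖w.1 + 2 * b * w.2‖ ≤ (q : ℝ) ^ ((2 * A : ℕ) : ℤ) ∧
            ‖w.2‖ ≤ (q : ℝ) ^ ((4 * A : ℕ) : ℤ)})
      ≤ ENNReal.ofReal ((q : ℝ) ^ ((4 * A : ℕ) : ℤ) / ‖b - a‖) :=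
  tube_intersection_general q hq2 μ hμ A a b hab
end
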